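/- arXiv:2005.03552 — 10 statements merged into one kernel-verified Lean document; each statement's English description precedes it below -/
import Mathlib

section
/- Let (c_{i,j}), 0 ≤ i ≤ s, 1 ≤ j ≤ n, be any feasible family of reals, i.e., c_{0,j} = r_j for all j, c_{i,j} ≥ c_{i-1,j} + p_i for all 1 ≤ i ≤ s and all j, and c_{i,j} ≥ c_{i,j-q_i} + p_i for all 1 ≤ i ≤ s and all j > q_i. Then c_{i,j} ≥ c*_{i,j} for all 1 ≤ i ≤ s and 1 ≤ j ≤ n. -/
/-!
Fix a stage `i`. If row `i - 1` of `c*` lies below row `i - 1` of `c`, then by strong induction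
on `j` row `i` does too: each of the two terms in the recursion for `c*_{i,j}` is bounded by the
corresponding lower bound on `c_{i,j}`, the second one by the induction hypothesis at `j - q_i < j`.
Induction on the stage, starting from `c*_{0,j} = r_j = c_{0,j}`, finishes the proof.
-/

theorem row_le_of_batch_recursion {n q : ℕ} (hq : 1 ≤ q) {p : ℝ} {prev prev' cur cur' : ℕ → ℝ}
    (hprev : ∀ j, 1 ≤ j → j ≤ n → prev j ≤ prev' j)
    (hle : ∀ j, 1 ≤ j → j ≤ n → j ≤ q → cur j ≤ prev j + p)
    (hgt : ∀ j, 1 ≤ j → j ≤ n → q < j → cur j ≤ max (prev j) (cur (j - q)) + p)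
    (hstage : ∀ j, 1 ≤ j → j ≤ n → prev' j + p ≤ cur' j)
    (hbatch : ∀ j, q < j → j ≤ n → cur' (j - q) + p ≤ cur' j) :
    ∀ j, 1 ≤ j → j ≤ n → cur j ≤ cur' j := by
  intro j
  induction j using Nat.strong_induction_on with
  | _ j ih =>
    intro hj1 hjn
    have hstage_j := hstage j hj1 hjn
    have hprev_j := hprev j hj1 hjn
    rcases le_or_gt j q with hjq | hqj
    · linarith [hle j hj1 hjn hjq]
    · have hearlier : cur (j - q) ≤ cur' (j - q) := ih (j - q) (by omega) (by omega) (by omega)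
      calc cur j ≤ max (prev j) (cur (j - q)) + p := hgt j hj1 hjn hqj
        _ ≤ cur' j := by
          have := hbatch j hqj hjn
          rw [← le_sub_iff_add_le]
          exact max_le (by linarith) (by linarith)

theorem feasible_family_ge_lower_bound_general
    (s n : ℕ)
    (p : ℕ → ℝ)
    (q : ℕ → ℕ) (hq : ∀ i, 1 ≤ i → i ≤ s → 1 ≤ q i)
    (r : ℕ → ℝ)
    (cstar : ℕ → ℕ → ℝ)
    (hcstar0 : ∀ j, 1 ≤ j → j ≤ n → cstar 0 j = r j)
    (hcstarle : ∀ i j, 1 ≤ i → i ≤ s → 1 ≤ j → j ≤ n → j ≤ q i →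
      cstar i j = cstar (i - 1) j + p i)
    (hcstargt : ∀ i j, 1 ≤ i → i ≤ s → 1 ≤ j → j ≤ n → q i < j →
      cstar i j = max (cstar (i - 1) j) (cstar i (j - q i)) + p i)
    (c : ℕ → ℕ → ℝ)
    (hc0 : ∀ j, 1 ≤ j → j ≤ n → c 0 j = r j)
    (hc1 : ∀ i j, 1 ≤ i → i ≤ s → 1 ≤ j → j ≤ n → c (i - 1) j + p i ≤ c i j)
    (hc2 : ∀ i j, 1 ≤ i → i ≤ s → q i < j → j ≤ n → c i (j - q i) + p i ≤ c i j) :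
    ∀ i j, 1 ≤ i → i ≤ s → 1 ≤ j → j ≤ n → cstar i j ≤ c i j := by
  have rows : ∀ i ≤ s, ∀ j, 1 ≤ j → j ≤ n → cstar i j ≤ c i j := by
    intro i
    induction i with
    | zero => intro _ j hj1 hjn; rw [hcstar0 j hj1 hjn, hc0 j hj1 hjn]
    | succ i ih =>
      intro hi
      have hi1 : 1 ≤ i + 1 := by omega
      exact row_le_of_batch_recursion (hq _ hi1 hi) (ih (by omega))
        (fun j hj1 hjn hjq => (hcstarle _ j hi1 hi hj1 hjn hjq).le)
        (fun j hj1 hjn hqj => (hcstargt _ j hi1 hi hj1 hjn hqj).le)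
        (hc1 _ · hi1 hi) (hc2 _ · hi1 hi)
  intro i j _ hi hj1 hjn
  exact rows i hi j hj1 hjn

/-- Any feasible family of stage-wise completion times dominates the
lower-bound values `c*` defined by the recursion
`c*_{0,j} = r_j`, `c*_{i,j} = c*_{i-1,j} + p_i` if `j ≤ q_i`,
`c*_{i,j} = max(c*_{i-1,j}, c*_{i,j-q_i}) + p_i` if `j > q_i`. -/
theorem feasible_family_ge_lower_bound
    (s n : ℕ) (hs : 1 ≤ s) (hn : 1 ≤ n)
    (p : ℕ → ℝ) (hp : ∀ i, 1 ≤ i → i ≤ s → 0 ≤ p i)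
    (q : ℕ → ℕ) (hq : ∀ i, 1 ≤ i → i ≤ s → 1 ≤ q i)
    (r : ℕ → ℝ) (hr : ∀ j, 1 ≤ j → j < n → r j ≤ r (j + 1))
    (cstar : ℕ → ℕ → ℝ)
    (hcstar0 : ∀ j, 1 ≤ j → j ≤ n → cstar 0 j = r j)
    (hcstarle : ∀ i j, 1 ≤ i → i ≤ s → 1 ≤ j → j ≤ n → j ≤ q i →
      cstar i j = cstar (i - 1) j + p i)
    (hcstargt : ∀ i j, 1 ≤ i → i ≤ s → 1 ≤ j → j ≤ n → q i < j →
      cstar i j = max (cstar (i - 1) j) (cstar i (j - q i)) + p i)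
    (c : ℕ → ℕ → ℝ)
    (hc0 : ∀ j, 1 ≤ j → j ≤ n → c 0 j = r j)
    (hc1 : ∀ i j, 1 ≤ i → i ≤ s → 1 ≤ j → j ≤ n → c (i - 1) j + p i ≤ c i j)
    (hc2 : ∀ i j, 1 ≤ i → i ≤ s → q i < j → j ≤ n → c i (j - q i) + p i ≤ c i j) :
    ∀ i j, 1 ≤ i → i ≤ s → 1 ≤ j → j ≤ n → cstar i j ≤ c i j :=
  feasible_family_ge_lower_bound_general s n p q hq r cstar hcstar0 hcstarle hcstargt c hc0 hc1 hc2
end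

section
/- The family (c*_{i,j}) is itself feasible, i.e., c*_{0,j} = r_j for all j, c*_{i,j} ≥ c*_{i-1,j} + p_i for all 1 ≤ i ≤ s and all j, and c*_{i,j} ≥ c*_{i,j-q_i} + p_i for all 1 ≤ i ≤ s and all j > q_i. Consequently (c*_{i,j}) is the pointwise minimum among all feasible families: every family (c_{i,j}) satisfying these constraints has c_{i,j} ≥ c*_{i,j} for all 1 ≤ i ≤ s and 1 ≤ j ≤ n. (These values are the completion times of an optimal schedule of the corresponding proportionate flexible flow shop without batching, where each stage has q_i parallel non-batching machines.) -/
/-!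
Stage by stage, `c*` is the least solution of that stage's constraints given the previous
stage's values. Job `j` cannot finish stage `i` before it finished stage `i - 1`, nor before
the job `q_i` places earlier in release order finished stage `i`. The recursion for `c*`
takes exactly the larger of these two bounds, so it satisfies both constraints. A strong
induction on `j` (possible since `q_i ≥ 1`) shows that any feasible family lies above it at
stage `i` once it lies above it at stage `i - 1`.
-/

def IsStageRecursion (n q : ℕ) (p : ℝ) (a x : ℕ → ℝ) : Prop :=
  (∀ j, 1 ≤ j → j ≤ n → j ≤ q → x j = a j + p) ∧
  (∀ j, 1 ≤ j → j ≤ n → q < j → x j = max (a j) (x (j - q)) + p)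

def IsStageFeasible (n q : ℕ) (p : ℝ) (a x : ℕ → ℝ) : Prop :=
  (∀ j, 1 ≤ j → j ≤ n → a j + p ≤ x j) ∧
  (∀ j, q < j → j ≤ n → x (j - q) + p ≤ x j)

namespace IsStageRecursion

variable {n q : ℕ} {p : ℝ} {a b x y : ℕ → ℝ}

theorem isStageFeasible (hx : IsStageRecursion n q p a x) : IsStageFeasible n q p a x := by
  refine ⟨fun j hj hjn => ?_, fun j hqj hjn => ?_⟩
  · rcases le_or_gt j q with hjq | hqj
    · rw [hx.1 j hj hjn hjq]
    · rw [hx.2 j hj hjn hqj]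
      linarith [le_max_left (a j) (x (j - q))]
  · rw [hx.2 j (by omega) hjn hqj]
    linarith [le_max_right (a j) (x (j - q))]

theorem le_of_isStageFeasible (hq : 1 ≤ q) (hx : IsStageRecursion n q p a x)
    (hy : IsStageFeasible n q p b y) (hab : ∀ j, 1 ≤ j → j ≤ n → a j ≤ b j) :
    ∀ j, 1 ≤ j → j ≤ n → x j ≤ y j := by
  intro j
  induction j using Nat.strong_induction_on with
  | _ j ih =>
    intro hj hjn
    have hprev := hy.1 j hj hjn
    rcases le_or_gt j q with hjq | hqj
    · rw [hx.1 j hj hjn hjq]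
      linarith [hab j hj hjn]
    · have hbatch := hy.2 j hqj hjn
      have hearlier := ih (j - q) (by omega) (by omega) (by omega)
      rw [hx.2 j hj hjn hqj, ← le_sub_iff_add_le]
      exact max_le (by linarith [hab j hj hjn]) (by linarith)

end IsStageRecursion

theorem lower_bound_feasible_and_pointwise_min_general
    (s n : ℕ)
    (p : ℕ → ℝ)
    (q : ℕ → ℕ) (hq : ∀ i, 1 ≤ i → i ≤ s → 1 ≤ q i)
    (r : ℕ → ℝ)
    (cstar : ℕ → ℕ → ℝ)
    (hcstar0 : ∀ j, 1 ≤ j → j ≤ n → cstar 0 j = r j)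
    (hcstarle : ∀ i j, 1 ≤ i → i ≤ s → 1 ≤ j → j ≤ n → j ≤ q i →
      cstar i j = cstar (i - 1) j + p i)
    (hcstargt : ∀ i j, 1 ≤ i → i ≤ s → 1 ≤ j → j ≤ n → q i < j →
      cstar i j = max (cstar (i - 1) j) (cstar i (j - q i)) + p i) :
    ((∀ j, 1 ≤ j → j ≤ n → cstar 0 j = r j) ∧
     (∀ i j, 1 ≤ i → i ≤ s → 1 ≤ j → j ≤ n → cstar (i - 1) j + p i ≤ cstar i j) ∧
     (∀ i j, 1 ≤ i → i ≤ s → q i < j → j ≤ n → cstar i (j - q i) + p i ≤ cstar i j)) ∧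
    (∀ c : ℕ → ℕ → ℝ,
      (∀ j, 1 ≤ j → j ≤ n → c 0 j = r j) →
      (∀ i j, 1 ≤ i → i ≤ s → 1 ≤ j → j ≤ n → c (i - 1) j + p i ≤ c i j) →
      (∀ i j, 1 ≤ i → i ≤ s → q i < j → j ≤ n → c i (j - q i) + p i ≤ c i j) →
      ∀ i j, 1 ≤ i → i ≤ s → 1 ≤ j → j ≤ n → cstar i j ≤ c i j) := by
  have hrec (i : ℕ) (hi : 1 ≤ i) (his : i ≤ s) :
      IsStageRecursion n (q i) (p i) (cstar (i - 1)) (cstar i) :=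
    ⟨fun j => hcstarle i j hi his, fun j => hcstargt i j hi his⟩
  refine ⟨⟨hcstar0, fun i j hi his => (hrec i hi his).isStageFeasible.1 j,
    fun i j hi his => (hrec i hi his).isStageFeasible.2 j⟩, ?_⟩
  intro c hc0 hc1 hc2 i
  induction i with
  | zero => intro _ h0; omega
  | succ i ih =>
    intro j _ his
    refine (hrec (i + 1) (by omega) his).le_of_isStageFeasible (hq (i + 1) (by omega) his)
      ⟨fun k => hc1 (i + 1) k (by omega) his, fun k => hc2 (i + 1) k (by omega) his⟩
      (fun k hk hkn => ?_) j
    rcases Nat.eq_zero_or_pos i with rfl | hi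
    · exact (hcstar0 k hk hkn).trans_le (hc0 k hk hkn).ge
    · exact ih k hi (by omega) hk hkn

/-- The lower-bound family `c*` is itself feasible, and it is the pointwise
minimum among all feasible families. -/
theorem lower_bound_feasible_and_pointwise_min
    (s n : ℕ) (hs : 1 ≤ s) (hn : 1 ≤ n)
    (p : ℕ → ℝ) (hp : ∀ i, 1 ≤ i → i ≤ s → 0 ≤ p i)
    (q : ℕ → ℕ) (hq : ∀ i, 1 ≤ i → i ≤ s → 1 ≤ q i)
    (r : ℕ → ℝ) (hr : ∀ j, 1 ≤ j → j < n → r j ≤ r (j + 1))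
    (cstar : ℕ → ℕ → ℝ)
    (hcstar0 : ∀ j, 1 ≤ j → j ≤ n → cstar 0 j = r j)
    (hcstarle : ∀ i j, 1 ≤ i → i ≤ s → 1 ≤ j → j ≤ n → j ≤ q i →
      cstar i j = cstar (i - 1) j + p i)
    (hcstargt : ∀ i j, 1 ≤ i → i ≤ s → 1 ≤ j → j ≤ n → q i < j →
      cstar i j = max (cstar (i - 1) j) (cstar i (j - q i)) + p i) :
    ((∀ j, 1 ≤ j → j ≤ n → cstar 0 j = r j) ∧
     (∀ i j, 1 ≤ i → i ≤ s → 1 ≤ j → j ≤ n → cstar (i - 1) j + p i ≤ cstar i j) ∧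
     (∀ i j, 1 ≤ i → i ≤ s → q i < j → j ≤ n → cstar i (j - q i) + p i ≤ cstar i j)) ∧
    (∀ c : ℕ → ℕ → ℝ,
      (∀ j, 1 ≤ j → j ≤ n → c 0 j = r j) →
      (∀ i j, 1 ≤ i → i ≤ s → 1 ≤ j → j ≤ n → c (i - 1) j + p i ≤ c i j) →
      (∀ i j, 1 ≤ i → i ≤ s → q i < j → j ≤ n → c i (j - q i) + p i ≤ c i j) →
      ∀ i j, 1 ≤ i → i ≤ s → 1 ≤ j → j ≤ n → cstar i j ≤ c i j) :=
  lower_bound_feasible_and_pointwise_min_general s n p q hq r cstar hcstar0 hcstarle hcstargt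
end

section
/- Assume additionally that r_j ≥ 0 for all 1 ≤ j ≤ n. Then for all 1 ≤ i ≤ s and 1 ≤ j ≤ n, the lower-bound values satisfy c*_{i,j} ≥ ⌈j/q_i⌉ · p_i. -/
/-!
Every stage adds `p_i ≥ 0` to a maximum involving `c*_{i-1,j}`, so `c*_{i,j} ≥ 0` by induction
on `i`. Within stage `i`, job `j > q_i` completes at least `p_i` after job `j - q_i`, while
`⌈j / q_i⌉ = ⌈(j - q_i) / q_i⌉ + 1`; strong induction on `j` finishes.
-/

namespace Nat

theorem ceilDiv_eq_one {j q : ℕ} (hj : 0 < j) (hjq : j ≤ q) : j ⌈/⌉ q = 1 := by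
  rw [ceilDiv_eq_add_pred_div]
  exact Nat.div_eq_of_lt_le (by omega) (by omega)

theorem sub_ceilDiv_add_one {j q : ℕ} (hq : 0 < q) (hqj : q ≤ j) :
    (j - q) ⌈/⌉ q + 1 = j ⌈/⌉ q := by
  rw [ceilDiv_eq_add_pred_div, ceilDiv_eq_add_pred_div, ← Nat.add_div_right _ hq]
  congr 1
  omega

end Nat

/-- `prev` and `cur` play the roles of `c*_{i-1,·}` and `c*_{i,·}`, with `q = q_i` and `p = p_i`. -/
structure IsBatchingStage (n q : ℕ) (p : ℝ) (prev cur : ℕ → ℝ) : Prop where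
  eq_of_le : ∀ j, 1 ≤ j → j ≤ n → j ≤ q → cur j = prev j + p
  eq_of_lt : ∀ j, 1 ≤ j → j ≤ n → q < j → cur j = max (prev j) (cur (j - q)) + p

namespace IsBatchingStage

variable {n q : ℕ} {p : ℝ} {prev cur : ℕ → ℝ}

theorem add_le (h : IsBatchingStage n q p prev cur) {j : ℕ} (hj1 : 1 ≤ j) (hjn : j ≤ n) :
    prev j + p ≤ cur j := by
  rcases le_or_gt j q with hjq | hqj
  · exact (h.eq_of_le j hj1 hjn hjq).ge
  · rw [h.eq_of_lt j hj1 hjn hqj]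
    gcongr
    exact le_max_left _ _

theorem sub_add_le (h : IsBatchingStage n q p prev cur) {j : ℕ} (hj1 : 1 ≤ j) (hjn : j ≤ n)
    (hqj : q < j) : cur (j - q) + p ≤ cur j := by
  rw [h.eq_of_lt j hj1 hjn hqj]
  gcongr
  exact le_max_right _ _

theorem nonneg (h : IsBatchingStage n q p prev cur) (hp : 0 ≤ p)
    (hprev : ∀ j, 1 ≤ j → j ≤ n → 0 ≤ prev j) {j : ℕ} (hj1 : 1 ≤ j) (hjn : j ≤ n) :
    0 ≤ cur j :=
  (add_nonneg (hprev j hj1 hjn) hp).trans (h.add_le hj1 hjn)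

theorem ceilDiv_mul_le (h : IsBatchingStage n q p prev cur) (hp : 0 ≤ p)
    (hprev : ∀ j, 1 ≤ j → j ≤ n → 0 ≤ prev j) {j : ℕ} (hj1 : 1 ≤ j) (hjn : j ≤ n) :
    ((j ⌈/⌉ q : ℕ) : ℝ) * p ≤ cur j := by
  induction j using Nat.strong_induction_on with
  | _ j ih =>
  rcases Nat.eq_zero_or_pos q with rfl | hq
  · simpa using h.nonneg hp hprev hj1 hjn
  rcases le_or_gt j q with hjq | hqj
  · rw [Nat.ceilDiv_eq_one hj1 hjq, Nat.cast_one, one_mul]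
    exact le_add_of_nonneg_left (hprev j hj1 hjn) |>.trans (h.add_le hj1 hjn)
  · calc ((j ⌈/⌉ q : ℕ) : ℝ) * p = (((j - q) ⌈/⌉ q : ℕ) : ℝ) * p + p := by
          rw [← Nat.sub_ceilDiv_add_one hq hqj.le]; push_cast; ring
      _ ≤ cur (j - q) + p := by gcongr; exact ih _ (by omega) (by omega) (by omega)
      _ ≤ cur j := h.sub_add_le hj1 hjn hqj

end IsBatchingStage

theorem lower_bound_ge_ceil_div_mul_proc_time_general
    (s n : ℕ)
    (p : ℕ → ℝ) (hp : ∀ i, 1 ≤ i → i ≤ s → 0 ≤ p i)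
    (q : ℕ → ℕ)
    (r : ℕ → ℝ)
    (hr0 : ∀ j, 1 ≤ j → j ≤ n → 0 ≤ r j)
    (cstar : ℕ → ℕ → ℝ)
    (hcstar0 : ∀ j, 1 ≤ j → j ≤ n → cstar 0 j = r j)
    (hcstarle : ∀ i j, 1 ≤ i → i ≤ s → 1 ≤ j → j ≤ n → j ≤ q i →
      cstar i j = cstar (i - 1) j + p i)
    (hcstargt : ∀ i j, 1 ≤ i → i ≤ s → 1 ≤ j → j ≤ n → q i < j →
      cstar i j = max (cstar (i - 1) j) (cstar i (j - q i)) + p i) :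
    ∀ i j, 1 ≤ i → i ≤ s → 1 ≤ j → j ≤ n →
      ((j ⌈/⌉ q i : ℕ) : ℝ) * p i ≤ cstar i j := by
  have hstage : ∀ i, 1 ≤ i → i ≤ s → IsBatchingStage n (q i) (p i) (cstar (i - 1)) (cstar i) :=
    fun i hi1 his => ⟨(hcstarle i · hi1 his), (hcstargt i · hi1 his)⟩
  have hnonneg : ∀ i, i ≤ s → ∀ j, 1 ≤ j → j ≤ n → 0 ≤ cstar i j := by
    intro i
    induction i with
    | zero => intro _ j hj1 hjn; exact hcstar0 j hj1 hjn ▸ hr0 j hj1 hjn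
    | succ i ih =>
      intro his j hj1 hjn
      exact (hstage (i + 1) (by omega) his).nonneg (hp _ (by omega) his) (ih (by omega)) hj1 hjn
  intro i j hi1 his hj1 hjn
  exact (hstage i hi1 his).ceilDiv_mul_le (hp i hi1 his) (hnonneg (i - 1) (by omega)) hj1 hjn

/-- If all release dates are nonnegative, then the lower-bound values satisfy
`c*_{i,j} ≥ ⌈j / q_i⌉ · p_i` for all `1 ≤ i ≤ s` and `1 ≤ j ≤ n`.
(Here `j ⌈/⌉ q i` is the ceiling of the natural division `j / q i`.) -/
theorem lower_bound_ge_ceil_div_mul_proc_time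
    (s n : ℕ) (hs : 1 ≤ s) (hn : 1 ≤ n)
    (p : ℕ → ℝ) (hp : ∀ i, 1 ≤ i → i ≤ s → 0 ≤ p i)
    (q : ℕ → ℕ) (hq : ∀ i, 1 ≤ i → i ≤ s → 1 ≤ q i)
    (r : ℕ → ℝ) (hr : ∀ j, 1 ≤ j → j < n → r j ≤ r (j + 1))
    (hr0 : ∀ j, 1 ≤ j → j ≤ n → 0 ≤ r j)
    (cstar : ℕ → ℕ → ℝ)
    (hcstar0 : ∀ j, 1 ≤ j → j ≤ n → cstar 0 j = r j)
    (hcstarle : ∀ i j, 1 ≤ i → i ≤ s → 1 ≤ j → j ≤ n → j ≤ q i →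
      cstar i j = cstar (i - 1) j + p i)
    (hcstargt : ∀ i j, 1 ≤ i → i ≤ s → 1 ≤ j → j ≤ n → q i < j →
      cstar i j = max (cstar (i - 1) j) (cstar i (j - q i)) + p i) :
    ∀ i j, 1 ≤ i → i ≤ s → 1 ≤ j → j ≤ n →
      ((j ⌈/⌉ q i : ℕ) : ℝ) * p i ≤ cstar i j :=
  lower_bound_ge_ceil_div_mul_proc_time_general s n p hp q r hr0 cstar hcstar0 hcstarle hcstargt
end

section
/- For all 1 ≤ i ≤ s and all job indices 1 ≤ j ≤ j' ≤ n, the lower-bound values satisfy c*_{i,j'} ≥ c*_{i,j} + ⌊(j'−j)/q_i⌋ · p_i. -/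
/-! Within one stage, a job `j > q` completes at least `p` after job `j - q`, so hopping back from
`j'` in steps of `q` gives `⌊(j' - j)/q⌋` increments of `p`; the remaining gap of fewer than `q`
jobs is absorbed by monotonicity of `c*` in the job index, which propagates stage by stage from the
ordered release dates. -/

open Set

structure IsStageRecursion_s5 (n q : ℕ) (p : ℝ) (prev cur : ℕ → ℝ) : Prop where
  eq_of_le : ∀ j, 1 ≤ j → j ≤ n → j ≤ q → cur j = prev j + p
  eq_of_lt : ∀ j, 1 ≤ j → j ≤ n → q < j → cur j = max (prev j) (cur (j - q)) + p

namespace IsStageRecursion_s5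

variable {n q : ℕ} {p : ℝ} {prev cur : ℕ → ℝ}

theorem prev_add_le (h : IsStageRecursion_s5 n q p prev cur) {j : ℕ} (hj : 1 ≤ j)
    (hjn : j ≤ n) : prev j + p ≤ cur j := by
  rcases le_or_gt j q with hjq | hjq
  · exact (h.eq_of_le j hj hjn hjq).ge
  · rw [h.eq_of_lt j hj hjn hjq]
    gcongr
    exact le_max_left _ _

theorem sub_add_le (h : IsStageRecursion_s5 n q p prev cur) {j : ℕ} (hqj : q < j) (hjn : j ≤ n) :
    cur (j - q) + p ≤ cur j := by
  rw [h.eq_of_lt j (by omega) hjn hqj]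
  gcongr
  exact le_max_right _ _

theorem monotoneOn (h : IsStageRecursion_s5 n q p prev cur) (hq : 1 ≤ q)
    (hprev : MonotoneOn prev (Icc 1 n)) : MonotoneOn cur (Icc 1 n) := by
  suffices key : ∀ j' j, 1 ≤ j → j ≤ j' → j' ≤ n → cur j ≤ cur j' by
    rintro j ⟨hj, -⟩ j' ⟨-, hj'n⟩ hjj'
    exact key j' j hj hjj' hj'n
  intro j'
  induction j' using Nat.strong_induction_on with
  | _ j' ih =>
    intro j hj hjj' hj'n
    have hprev_le : prev j ≤ prev j' := hprev ⟨hj, by omega⟩ ⟨by omega, hj'n⟩ hjj'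
    rcases le_or_gt j q with hjq | hqj
    · calc cur j = prev j + p := h.eq_of_le j hj (by omega) hjq
        _ ≤ prev j' + p := by gcongr
        _ ≤ cur j' := h.prev_add_le (by omega) hj'n
    · have hcur_le : cur (j - q) ≤ cur (j' - q) :=
        ih (j' - q) (by omega) _ (by omega) (by omega) (by omega)
      rw [h.eq_of_lt j hj (by omega) hqj, h.eq_of_lt j' (by omega) hj'n (by omega)]
      gcongr

theorem add_mul_le (h : IsStageRecursion_s5 n q p prev cur) (hcur : MonotoneOn cur (Icc 1 n))
    {j j' : ℕ} (hj : 1 ≤ j) (k : ℕ) (hjj' : j + k * q ≤ j') (hj'n : j' ≤ n) :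
    cur j + k * p ≤ cur j' := by
  induction k generalizing j' with
  | zero => simpa using hcur ⟨hj, by omega⟩ ⟨by omega, hj'n⟩ (by omega : j ≤ j')
  | succ k ih =>
    rw [Nat.succ_mul] at hjj'
    calc cur j + ↑(k + 1) * p = (cur j + k * p) + p := by push_cast; ring
      _ ≤ cur (j' - q) + p := by gcongr; exact ih (by omega) (by omega)
      _ ≤ cur j' := h.sub_add_le (by omega) hj'n

theorem add_div_mul_le (h : IsStageRecursion_s5 n q p prev cur) (hcur : MonotoneOn cur (Icc 1 n))
    {j j' : ℕ} (hj : 1 ≤ j) (hjj' : j ≤ j') (hj'n : j' ≤ n) :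
    cur j + (((j' - j) / q : ℕ) : ℝ) * p ≤ cur j' :=
  h.add_mul_le hcur hj _ (by have := Nat.div_mul_le_self (j' - j) q; omega) hj'n

end IsStageRecursion_s5

theorem lower_bound_floor_div_gap_general
    (s n : ℕ)
    (p : ℕ → ℝ)
    (q : ℕ → ℕ) (hq : ∀ i, 1 ≤ i → i ≤ s → 1 ≤ q i)
    (r : ℕ → ℝ) (hr : ∀ j, 1 ≤ j → j < n → r j ≤ r (j + 1))
    (cstar : ℕ → ℕ → ℝ)
    (hcstar0 : ∀ j, 1 ≤ j → j ≤ n → cstar 0 j = r j)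
    (hcstarle : ∀ i j, 1 ≤ i → i ≤ s → 1 ≤ j → j ≤ n → j ≤ q i →
      cstar i j = cstar (i - 1) j + p i)
    (hcstargt : ∀ i j, 1 ≤ i → i ≤ s → 1 ≤ j → j ≤ n → q i < j →
      cstar i j = max (cstar (i - 1) j) (cstar i (j - q i)) + p i) :
    ∀ i j j', 1 ≤ i → i ≤ s → 1 ≤ j → j ≤ j' → j' ≤ n →
      cstar i j + (((j' - j) / q i : ℕ) : ℝ) * p i ≤ cstar i j' := by
  have hstage : ∀ i, 1 ≤ i → i ≤ s →
      IsStageRecursion_s5 n (q i) (p i) (cstar (i - 1)) (cstar i) := fun i hi his =>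
    ⟨fun j => hcstarle i j hi his, fun j => hcstargt i j hi his⟩
  have hr_mono : MonotoneOn r (Icc 1 n) :=
    monotoneOn_of_le_succ ordConnected_Icc fun j _ hj hj1 => hr j hj.1 hj1.2
  have hmono : ∀ i, i ≤ s → MonotoneOn (cstar i) (Icc 1 n) := by
    intro i
    induction i with
    | zero => exact fun _ => hr_mono.congr fun j hj => (hcstar0 j hj.1 hj.2).symm
    | succ i ih =>
      intro his
      exact (hstage (i + 1) (by omega) his).monotoneOn (hq _ (by omega) his) (ih (by omega))
  intro i j j' hi his hj hjj' hj'n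
  exact (hstage i hi his).add_div_mul_le (hmono i his) hj hjj' hj'n

/-- For all `1 ≤ i ≤ s` and job indices `1 ≤ j ≤ j' ≤ n`, the lower-bound
values satisfy `c*_{i,j'} ≥ c*_{i,j} + ⌊(j' − j) / q_i⌋ · p_i`.
(Here `(j' - j) / q i` is natural (floor) division.) -/
theorem lower_bound_floor_div_gap
    (s n : ℕ) (hs : 1 ≤ s) (hn : 1 ≤ n)
    (p : ℕ → ℝ) (hp : ∀ i, 1 ≤ i → i ≤ s → 0 ≤ p i)
    (q : ℕ → ℕ) (hq : ∀ i, 1 ≤ i → i ≤ s → 1 ≤ q i)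
    (r : ℕ → ℝ) (hr : ∀ j, 1 ≤ j → j < n → r j ≤ r (j + 1))
    (cstar : ℕ → ℕ → ℝ)
    (hcstar0 : ∀ j, 1 ≤ j → j ≤ n → cstar 0 j = r j)
    (hcstarle : ∀ i j, 1 ≤ i → i ≤ s → 1 ≤ j → j ≤ n → j ≤ q i →
      cstar i j = cstar (i - 1) j + p i)
    (hcstargt : ∀ i j, 1 ≤ i → i ≤ s → 1 ≤ j → j ≤ n → q i < j →
      cstar i j = max (cstar (i - 1) j) (cstar i (j - q i)) + p i) :
    ∀ i j j', 1 ≤ i → i ≤ s → 1 ≤ j → j ≤ j' → j' ≤ n →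
      cstar i j + (((j' - j) / q i : ℕ) : ℝ) * p i ≤ cstar i j' :=
  lower_bound_floor_div_gap_general s n p q hq r hr cstar hcstar0 hcstarle hcstargt
end

section
/- Let (c_{i,j}) be a Never-Wait family, i.e., c_{0,j} = r_j for all j and for every 1 ≤ i ≤ s and 1 ≤ j ≤ n at least one of the following holds: (a) c_{i,j} ≤ c_{i-1,j} + 2·p_i, or (b) j > q_i and c_{i,j} ≤ c_{i,j-q_i} + p_i. Then for all 1 ≤ i ≤ s and 1 ≤ j ≤ n, c_{i,j} ≤ c*_{i,j} + Σ_{i'=1}^{i} p_{i'}. -/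
/-!
Induction on the job `j` (strongly) and, inside, on the stage `i`. Writing `P i = ∑_{i' ≤ i} p_{i'}`,
the recursion for `c*` gives `c*_{i-1,j} + p_i ≤ c*_{i,j}` and, for `j > q_i`,
`c*_{i,j-q_i} + p_i ≤ c*_{i,j}`. In case (a) the extra `p_i` of the Never-Wait step is absorbed by the
new summand of `P i`; in case (b) the bound for the earlier job `j - q_i` at the same stage transfers
with no loss at all.
-/

section NeverWait

variable {s n : ℕ} {p : ℕ → ℝ} {q : ℕ → ℕ} {cstar c : ℕ → ℕ → ℝ}

theorem lowerBound_stage_step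
    (hcstarle : ∀ i j, 1 ≤ i → i ≤ s → 1 ≤ j → j ≤ n → j ≤ q i →
      cstar i j = cstar (i - 1) j + p i)
    (hcstargt : ∀ i j, 1 ≤ i → i ≤ s → 1 ≤ j → j ≤ n → q i < j →
      cstar i j = max (cstar (i - 1) j) (cstar i (j - q i)) + p i)
    (i j : ℕ) (hi : i < s) (hj : 1 ≤ j) (hjn : j ≤ n) :
    cstar i j + p (i + 1) ≤ cstar (i + 1) j := by
  rcases le_or_gt j (q (i + 1)) with hle | hlt
  · rw [hcstarle (i + 1) j (Nat.le_add_left 1 i) hi hj hjn hle, Nat.add_sub_cancel]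
  · rw [hcstargt (i + 1) j (Nat.le_add_left 1 i) hi hj hjn hlt, Nat.add_sub_cancel]
    gcongr
    exact le_max_left _ _

theorem lowerBound_batch_step
    (hcstargt : ∀ i j, 1 ≤ i → i ≤ s → 1 ≤ j → j ≤ n → q i < j →
      cstar i j = max (cstar (i - 1) j) (cstar i (j - q i)) + p i)
    (i j : ℕ) (hi : 1 ≤ i) (his : i ≤ s) (hjn : j ≤ n) (hqj : q i < j) :
    cstar i (j - q i) + p i ≤ cstar i j := by
  rw [hcstargt i j hi his (by omega) hjn hqj]
  gcongr
  exact le_max_right _ _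

theorem le_add_sum_of_neverWait
    (hq : ∀ i, 1 ≤ i → i ≤ s → 1 ≤ q i)
    (hstage : ∀ i j, i < s → 1 ≤ j → j ≤ n → cstar i j + p (i + 1) ≤ cstar (i + 1) j)
    (hbatch : ∀ i j, 1 ≤ i → i ≤ s → j ≤ n → q i < j → cstar i (j - q i) + p i ≤ cstar i j)
    (hc0 : ∀ j, 1 ≤ j → j ≤ n → c 0 j ≤ cstar 0 j)
    (hNW : ∀ i j, 1 ≤ i → i ≤ s → 1 ≤ j → j ≤ n →
      c i j ≤ c (i - 1) j + 2 * p i ∨ (q i < j ∧ c i j ≤ c i (j - q i) + p i))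
    (i j : ℕ) (hi : i ≤ s) (hj : 1 ≤ j) (hjn : j ≤ n) :
    c i j ≤ cstar i j + ∑ i' ∈ Finset.Icc 1 i, p i' := by
  induction j using Nat.strong_induction_on generalizing i with
  | _ j ihj =>
    induction i with
    | zero => simpa using hc0 j hj hjn
    | succ i ihi =>
      rw [Finset.sum_Icc_succ_top (Nat.le_add_left 1 i)]
      rcases hNW (i + 1) j (Nat.le_add_left 1 i) hi hj hjn with hwait | ⟨hqj, hbatched⟩
      · rw [Nat.add_sub_cancel] at hwait
        have hprev := ihi (Nat.le_of_succ_le hi)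
        have hstep := hstage i j hi hj hjn
        linarith
      · have hearlier := ihj (j - q (i + 1)) (by have := hq (i + 1) (Nat.le_add_left 1 i) hi; omega)
          (i + 1) hi (by omega) (by omega)
        rw [Finset.sum_Icc_succ_top (Nat.le_add_left 1 i)] at hearlier
        have hstep := hbatch (i + 1) j (Nat.le_add_left 1 i) hi hjn hqj
        linarith

end NeverWait

theorem never_wait_family_bound_general
    (s n : ℕ)
    (p : ℕ → ℝ)
    (q : ℕ → ℕ) (hq : ∀ i, 1 ≤ i → i ≤ s → 1 ≤ q i)
    (r : ℕ → ℝ)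
    (cstar : ℕ → ℕ → ℝ)
    (hcstar0 : ∀ j, 1 ≤ j → j ≤ n → cstar 0 j = r j)
    (hcstarle : ∀ i j, 1 ≤ i → i ≤ s → 1 ≤ j → j ≤ n → j ≤ q i →
      cstar i j = cstar (i - 1) j + p i)
    (hcstargt : ∀ i j, 1 ≤ i → i ≤ s → 1 ≤ j → j ≤ n → q i < j →
      cstar i j = max (cstar (i - 1) j) (cstar i (j - q i)) + p i)
    (c : ℕ → ℕ → ℝ)
    (hc0 : ∀ j, 1 ≤ j → j ≤ n → c 0 j = r j)
    (hNW : ∀ i j, 1 ≤ i → i ≤ s → 1 ≤ j → j ≤ n →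
      c i j ≤ c (i - 1) j + 2 * p i ∨ (q i < j ∧ c i j ≤ c i (j - q i) + p i)) :
    ∀ i j, 1 ≤ i → i ≤ s → 1 ≤ j → j ≤ n →
      c i j ≤ cstar i j + ∑ i' ∈ Finset.Icc 1 i, p i' := by
  intro i j _ hi hj hjn
  exact le_add_sum_of_neverWait hq (lowerBound_stage_step hcstarle hcstargt)
    (lowerBound_batch_step hcstargt)
    (fun j hj hjn => ((hc0 j hj hjn).trans (hcstar0 j hj hjn).symm).le) hNW i j hi hj hjn

/-- Never-Wait bound: if `(c_{i,j})` is a Never-Wait family, i.e. `c_{0,j} = r_j`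
and for every stage `i` and job `j` either (a) `c_{i,j} ≤ c_{i-1,j} + 2 p_i` or
(b) `j > q_i` and `c_{i,j} ≤ c_{i,j-q_i} + p_i`, then
`c_{i,j} ≤ c*_{i,j} + ∑_{i'=1}^{i} p_{i'}` for all `1 ≤ i ≤ s`, `1 ≤ j ≤ n`. -/
theorem never_wait_family_bound
    (s n : ℕ) (hs : 1 ≤ s) (hn : 1 ≤ n)
    (p : ℕ → ℝ) (hp : ∀ i, 1 ≤ i → i ≤ s → 0 ≤ p i)
    (q : ℕ → ℕ) (hq : ∀ i, 1 ≤ i → i ≤ s → 1 ≤ q i)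
    (r : ℕ → ℝ) (hr : ∀ j, 1 ≤ j → j < n → r j ≤ r (j + 1))
    (cstar : ℕ → ℕ → ℝ)
    (hcstar0 : ∀ j, 1 ≤ j → j ≤ n → cstar 0 j = r j)
    (hcstarle : ∀ i j, 1 ≤ i → i ≤ s → 1 ≤ j → j ≤ n → j ≤ q i →
      cstar i j = cstar (i - 1) j + p i)
    (hcstargt : ∀ i j, 1 ≤ i → i ≤ s → 1 ≤ j → j ≤ n → q i < j →
      cstar i j = max (cstar (i - 1) j) (cstar i (j - q i)) + p i)
    (c : ℕ → ℕ → ℝ)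
    (hc0 : ∀ j, 1 ≤ j → j ≤ n → c 0 j = r j)
    (hNW : ∀ i j, 1 ≤ i → i ≤ s → 1 ≤ j → j ≤ n →
      c i j ≤ c (i - 1) j + 2 * p i ∨ (q i < j ∧ c i j ≤ c i (j - q i) + p i)) :
    ∀ i j, 1 ≤ i → i ≤ s → 1 ≤ j → j ≤ n →
      c i j ≤ cstar i j + ∑ i' ∈ Finset.Icc 1 i, p i' :=
  never_wait_family_bound_general s n p q hq r cstar hcstar0 hcstarle hcstargt c hc0 hNW
end

section
/- Assume additionally r_j ≥ 0 for all j. Let (c_{i,j}) be a Never-Wait family and let (c'_{i,j}) be any feasible family. Then for every job 1 ≤ j ≤ n, c_{s,j} ≤ 2·c'_{s,j} − r_j; in particular c_{s,j} ≤ 2·c'_{s,j}, and hence max_{1≤j≤n} c_{s,j} ≤ 2·max_{1≤j≤n} c'_{s,j} and Σ_{j=1}^n c_{s,j} ≤ 2·Σ_{j=1}^n c'_{s,j}. (The Never-Wait algorithm is 2-competitive with respect to makespan and total completion time.) -/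
/-!
Write `P_i = p_1 + ⋯ + p_i`. Every feasible family satisfies `r_j + P_i ≤ c'_{i,j}`, since job `j`
passes through stages `1, …, i` after its release. A Never-Wait family satisfies
`c_{i,j} ≤ c'_{i,j} + P_i`, by induction on the stage `i` and, within a stage, strong induction on
the job `j`: in case (a) the bound for `(i - 1, j)` together with `c'_{i-1,j} + p_i ≤ c'_{i,j}`
absorbs the extra `2 p_i`, and in case (b) the bound for `(i, j - q_i)` together with
`c'_{i,j-q_i} + p_i ≤ c'_{i,j}` absorbs the extra `p_i`. Adding the two bounds at `i = s` gives
`c_{s,j} ≤ 2 c'_{s,j} - r_j`.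
-/

open Finset

structure IsFeasibleFamily (s n : ℕ) (p : ℕ → ℝ) (q : ℕ → ℕ) (r : ℕ → ℝ) (c : ℕ → ℕ → ℝ) :
    Prop where
  release : ∀ j, 1 ≤ j → j ≤ n → c 0 j = r j
  stage : ∀ i j, 1 ≤ i → i ≤ s → 1 ≤ j → j ≤ n → c (i - 1) j + p i ≤ c i j
  capacity : ∀ i j, 1 ≤ i → i ≤ s → q i < j → j ≤ n → c i (j - q i) + p i ≤ c i j

structure IsNeverWaitFamily (s n : ℕ) (p : ℕ → ℝ) (q : ℕ → ℕ) (r : ℕ → ℝ) (c : ℕ → ℕ → ℝ) :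
    Prop where
  release : ∀ j, 1 ≤ j → j ≤ n → c 0 j = r j
  never_wait : ∀ i j, 1 ≤ i → i ≤ s → 1 ≤ j → j ≤ n →
    c i j ≤ c (i - 1) j + 2 * p i ∨ (q i < j ∧ c i j ≤ c i (j - q i) + p i)

variable {s n : ℕ} {p : ℕ → ℝ} {q : ℕ → ℕ} {r : ℕ → ℝ} {c c' : ℕ → ℕ → ℝ}

theorem IsFeasibleFamily.release_add_sum_le (hc : IsFeasibleFamily s n p q r c) :
    ∀ i ≤ s, ∀ j, 1 ≤ j → j ≤ n → r j + ∑ k ∈ Icc 1 i, p k ≤ c i j := by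
  intro i
  induction i with
  | zero => intro _ j hj1 hjn; simp [hc.release j hj1 hjn]
  | succ i ih =>
    intro hi j hj1 hjn
    have hprev := ih (by omega) j hj1 hjn
    have hstage := hc.stage (i + 1) j (by omega) hi hj1 hjn
    rw [Nat.add_sub_cancel] at hstage
    rw [sum_Icc_succ_top (by omega)]
    linarith

theorem IsNeverWaitFamily.le_add_sum (hc : IsNeverWaitFamily s n p q r c)
    (hc' : IsFeasibleFamily s n p q r c') (hq : ∀ i, 1 ≤ i → i ≤ s → 1 ≤ q i) :
    ∀ i ≤ s, ∀ j, 1 ≤ j → j ≤ n → c i j ≤ c' i j + ∑ k ∈ Icc 1 i, p k := by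
  intro i
  induction i with
  | zero => intro _ j hj1 hjn; simp [hc.release j hj1 hjn, hc'.release j hj1 hjn]
  | succ i ih =>
    intro hi j
    induction j using Nat.strong_induction_on with
    | _ j ihj =>
      intro hj1 hjn
      rcases hc.never_wait (i + 1) j (by omega) hi hj1 hjn with hwait | ⟨hjq, hbatch⟩
      · have hprev := ih (by omega) j hj1 hjn
        have hstage := hc'.stage (i + 1) j (by omega) hi hj1 hjn
        rw [Nat.add_sub_cancel] at hwait hstage
        rw [sum_Icc_succ_top (by omega)]
        linarith
      · have hq1 := hq (i + 1) (by omega) hi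
        have hearlier := ihj (j - q (i + 1)) (by omega) (by omega) (by omega)
        have hcap := hc'.capacity (i + 1) j (by omega) hi hjq hjn
        linarith

theorem IsNeverWaitFamily.le_two_mul_sub_release (hc : IsNeverWaitFamily s n p q r c)
    (hc' : IsFeasibleFamily s n p q r c') (hq : ∀ i, 1 ≤ i → i ≤ s → 1 ≤ q i)
    {j : ℕ} (hj1 : 1 ≤ j) (hjn : j ≤ n) : c s j ≤ 2 * c' s j - r j := by
  have hupper := hc.le_add_sum hc' hq s le_rfl j hj1 hjn
  have hlower := hc'.release_add_sum_le s le_rfl j hj1 hjn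
  linarith

theorem never_wait_two_competitive_makespan_total_completion_general
    (s n : ℕ) (hn : 1 ≤ n)
    (p : ℕ → ℝ)
    (q : ℕ → ℕ) (hq : ∀ i, 1 ≤ i → i ≤ s → 1 ≤ q i)
    (r : ℕ → ℝ)
    (hr0 : ∀ j, 1 ≤ j → j ≤ n → 0 ≤ r j)
    (c : ℕ → ℕ → ℝ)
    (hc0 : ∀ j, 1 ≤ j → j ≤ n → c 0 j = r j)
    (hNW : ∀ i j, 1 ≤ i → i ≤ s → 1 ≤ j → j ≤ n →
      c i j ≤ c (i - 1) j + 2 * p i ∨ (q i < j ∧ c i j ≤ c i (j - q i) + p i))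
    (c' : ℕ → ℕ → ℝ)
    (hc'0 : ∀ j, 1 ≤ j → j ≤ n → c' 0 j = r j)
    (hc'1 : ∀ i j, 1 ≤ i → i ≤ s → 1 ≤ j → j ≤ n → c' (i - 1) j + p i ≤ c' i j)
    (hc'2 : ∀ i j, 1 ≤ i → i ≤ s → q i < j → j ≤ n → c' i (j - q i) + p i ≤ c' i j) :
    (∀ j, 1 ≤ j → j ≤ n → c s j ≤ 2 * c' s j - r j) ∧
    (∀ j, 1 ≤ j → j ≤ n → c s j ≤ 2 * c' s j) ∧
    (Finset.Icc 1 n).sup' (Finset.nonempty_Icc.mpr hn) (fun j => c s j) ≤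
      2 * (Finset.Icc 1 n).sup' (Finset.nonempty_Icc.mpr hn) (fun j => c' s j) ∧
    ∑ j ∈ Finset.Icc 1 n, c s j ≤ 2 * ∑ j ∈ Finset.Icc 1 n, c' s j := by
  have hsharp : ∀ j, 1 ≤ j → j ≤ n → c s j ≤ 2 * c' s j - r j := fun j hj1 hjn =>
    IsNeverWaitFamily.le_two_mul_sub_release ⟨hc0, hNW⟩ ⟨hc'0, hc'1, hc'2⟩ hq hj1 hjn
  have htwice : ∀ j ∈ Icc 1 n, c s j ≤ 2 * c' s j := fun j hj => by
    obtain ⟨hj1, hjn⟩ := mem_Icc.mp hj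
    linarith [hsharp j hj1 hjn, hr0 j hj1 hjn]
  refine ⟨hsharp, fun j hj1 hjn => htwice j (mem_Icc.mpr ⟨hj1, hjn⟩), ?_, ?_⟩
  · rw [mul₀_sup' zero_le_two]
    exact sup'_mono_fun htwice
  · rw [mul_sum]
    exact sum_le_sum htwice

/-- 2-competitiveness of the Never-Wait algorithm for makespan and total
completion time: with nonnegative release dates, for a Never-Wait family `c`
and any feasible family `c'` we have `c_{s,j} ≤ 2 c'_{s,j} − r_j` for every
job `j`, hence `c_{s,j} ≤ 2 c'_{s,j}`, `max_j c_{s,j} ≤ 2 max_j c'_{s,j}` and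
`∑_j c_{s,j} ≤ 2 ∑_j c'_{s,j}`. -/
theorem never_wait_two_competitive_makespan_total_completion
    (s n : ℕ) (hs : 1 ≤ s) (hn : 1 ≤ n)
    (p : ℕ → ℝ) (hp : ∀ i, 1 ≤ i → i ≤ s → 0 ≤ p i)
    (q : ℕ → ℕ) (hq : ∀ i, 1 ≤ i → i ≤ s → 1 ≤ q i)
    (r : ℕ → ℝ) (hr : ∀ j, 1 ≤ j → j < n → r j ≤ r (j + 1))
    (hr0 : ∀ j, 1 ≤ j → j ≤ n → 0 ≤ r j)
    (c : ℕ → ℕ → ℝ)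
    (hc0 : ∀ j, 1 ≤ j → j ≤ n → c 0 j = r j)
    (hNW : ∀ i j, 1 ≤ i → i ≤ s → 1 ≤ j → j ≤ n →
      c i j ≤ c (i - 1) j + 2 * p i ∨ (q i < j ∧ c i j ≤ c i (j - q i) + p i))
    (c' : ℕ → ℕ → ℝ)
    (hc'0 : ∀ j, 1 ≤ j → j ≤ n → c' 0 j = r j)
    (hc'1 : ∀ i j, 1 ≤ i → i ≤ s → 1 ≤ j → j ≤ n → c' (i - 1) j + p i ≤ c' i j)
    (hc'2 : ∀ i j, 1 ≤ i → i ≤ s → q i < j → j ≤ n → c' i (j - q i) + p i ≤ c' i j) :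
    (∀ j, 1 ≤ j → j ≤ n → c s j ≤ 2 * c' s j - r j) ∧
    (∀ j, 1 ≤ j → j ≤ n → c s j ≤ 2 * c' s j) ∧
    (Finset.Icc 1 n).sup' (Finset.nonempty_Icc.mpr hn) (fun j => c s j) ≤
      2 * (Finset.Icc 1 n).sup' (Finset.nonempty_Icc.mpr hn) (fun j => c' s j) ∧
    ∑ j ∈ Finset.Icc 1 n, c s j ≤ 2 * ∑ j ∈ Finset.Icc 1 n, c' s j :=
  never_wait_two_competitive_makespan_total_completion_general s n hn p q hq r hr0 c hc0 hNW c' hc'0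
    hc'1 hc'2
end

section
/- Let (c_{i,j}) be a Never-Wait family and let (c'_{i,j}) be any feasible family. Then for every job 1 ≤ j ≤ n, the flow times satisfy c_{s,j} − r_j ≤ 2·(c'_{s,j} − r_j); consequently max_{1≤j≤n}(c_{s,j} − r_j) ≤ 2·max_{1≤j≤n}(c'_{s,j} − r_j) and Σ_{j=1}^n (c_{s,j} − r_j) ≤ 2·Σ_{j=1}^n (c'_{s,j} − r_j). (The Never-Wait algorithm is 2-competitive with respect to maximum flow time and total flow time.) -/
/-!
Write `P i = p 1 + ⋯ + p i`. Any feasible family satisfies `r j + P i ≤ c' i j`, since a job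
passes through the stages one after the other. A Never-Wait family lags behind any feasible
one by at most `P i`, by induction on the stage and, within a stage, on the job: in case (a)
the extra `p i` of the Never-Wait rule is paid for by `c' (i-1) j + p i ≤ c' i j`, and in
case (b) both families satisfy the same capacity recursion. At the last stage,
`c s j - r j ≤ c' s j - r j + P s ≤ 2 (c' s j - r j)`, and the maximum and the sum inherit
this pointwise bound.
-/

open Finset

lemma sum_Icc_one_succ (p : ℕ → ℝ) (i : ℕ) :
    ∑ k ∈ Icc 1 (i + 1), p k = ∑ k ∈ Icc 1 i, p k + p (i + 1) :=
  sum_Icc_succ_top (by omega) p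

lemma add_sum_Icc_le_of_feasible {s n : ℕ} {p r : ℕ → ℝ} {c : ℕ → ℕ → ℝ}
    (hc0 : ∀ j, 1 ≤ j → j ≤ n → c 0 j = r j)
    (hstage : ∀ i j, 1 ≤ i → i ≤ s → 1 ≤ j → j ≤ n → c (i - 1) j + p i ≤ c i j)
    {i j : ℕ} (hi : i ≤ s) (hj : 1 ≤ j) (hjn : j ≤ n) :
    r j + ∑ k ∈ Icc 1 i, p k ≤ c i j := by
  induction i with
  | zero => simp [hc0 j hj hjn]
  | succ i ih =>
    have hstep := hstage (i + 1) j (by omega) hi hj hjn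
    rw [Nat.add_sub_cancel] at hstep
    rw [sum_Icc_one_succ]
    linarith [ih (by omega)]

lemma le_add_sum_Icc_of_neverWait {s n : ℕ} {p : ℕ → ℝ} {q : ℕ → ℕ} {c c' : ℕ → ℕ → ℝ}
    (hq : ∀ i, 1 ≤ i → i ≤ s → 1 ≤ q i)
    (h0 : ∀ j, 1 ≤ j → j ≤ n → c 0 j ≤ c' 0 j)
    (hNW : ∀ i j, 1 ≤ i → i ≤ s → 1 ≤ j → j ≤ n →
      c i j ≤ c (i - 1) j + 2 * p i ∨ (q i < j ∧ c i j ≤ c i (j - q i) + p i))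
    (hstage : ∀ i j, 1 ≤ i → i ≤ s → 1 ≤ j → j ≤ n → c' (i - 1) j + p i ≤ c' i j)
    (hcap : ∀ i j, 1 ≤ i → i ≤ s → q i < j → j ≤ n → c' i (j - q i) + p i ≤ c' i j)
    {i j : ℕ} (hi : i ≤ s) (hj : 1 ≤ j) (hjn : j ≤ n) :
    c i j ≤ c' i j + ∑ k ∈ Icc 1 i, p k := by
  induction i generalizing j with
  | zero => simpa using h0 j hj hjn
  | succ i ih =>
    induction j using Nat.strong_induction_on with
    | _ j ihj =>
      rw [sum_Icc_one_succ]
      rcases hNW (i + 1) j (by omega) hi hj hjn with hwait | ⟨hqj, hbatch⟩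
      · have hstep := hstage (i + 1) j (by omega) hi hj hjn
        rw [Nat.add_sub_cancel] at hwait hstep
        linarith [ih (by omega) hj hjn]
      · have hq1 := hq (i + 1) (by omega) hi
        have hprev := ihj (j - q (i + 1)) (by omega) (by omega) (by omega)
        rw [sum_Icc_one_succ] at hprev
        linarith [hcap (i + 1) j (by omega) hi hqj hjn]

theorem never_wait_two_competitive_flow_time_general
    (s n : ℕ) (hn : 1 ≤ n)
    (p : ℕ → ℝ)
    (q : ℕ → ℕ) (hq : ∀ i, 1 ≤ i → i ≤ s → 1 ≤ q i)
    (r : ℕ → ℝ)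
    (c : ℕ → ℕ → ℝ)
    (hc0 : ∀ j, 1 ≤ j → j ≤ n → c 0 j = r j)
    (hNW : ∀ i j, 1 ≤ i → i ≤ s → 1 ≤ j → j ≤ n →
      c i j ≤ c (i - 1) j + 2 * p i ∨ (q i < j ∧ c i j ≤ c i (j - q i) + p i))
    (c' : ℕ → ℕ → ℝ)
    (hc'0 : ∀ j, 1 ≤ j → j ≤ n → c' 0 j = r j)
    (hc'1 : ∀ i j, 1 ≤ i → i ≤ s → 1 ≤ j → j ≤ n → c' (i - 1) j + p i ≤ c' i j)
    (hc'2 : ∀ i j, 1 ≤ i → i ≤ s → q i < j → j ≤ n → c' i (j - q i) + p i ≤ c' i j) :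
    (∀ j, 1 ≤ j → j ≤ n → c s j - r j ≤ 2 * (c' s j - r j)) ∧
    (Finset.Icc 1 n).sup' (Finset.nonempty_Icc.mpr hn) (fun j => c s j - r j) ≤
      2 * (Finset.Icc 1 n).sup' (Finset.nonempty_Icc.mpr hn) (fun j => c' s j - r j) ∧
    ∑ j ∈ Finset.Icc 1 n, (c s j - r j) ≤ 2 * ∑ j ∈ Finset.Icc 1 n, (c' s j - r j) := by
  have h0 : ∀ j, 1 ≤ j → j ≤ n → c 0 j ≤ c' 0 j := fun j hj hjn =>
    ((hc0 j hj hjn).trans (hc'0 j hj hjn).symm).le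
  have hflow : ∀ j, 1 ≤ j → j ≤ n → c s j - r j ≤ 2 * (c' s j - r j) := fun j hj hjn => by
    linarith [le_add_sum_Icc_of_neverWait hq h0 hNW hc'1 hc'2 le_rfl hj hjn,
      add_sum_Icc_le_of_feasible hc'0 hc'1 le_rfl hj hjn]
  have hflow' : ∀ j ∈ Icc 1 n, c s j - r j ≤ 2 * (c' s j - r j) := fun j hj =>
    hflow j (mem_Icc.mp hj).1 (mem_Icc.mp hj).2
  refine ⟨hflow, ?_, ?_⟩
  · rw [mul₀_sup' two_pos.le]
    exact sup'_mono_fun hflow'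
  · rw [mul_sum]
    exact sum_le_sum hflow'

/-- 2-competitiveness of the Never-Wait algorithm for maximum flow time and
total flow time: for a Never-Wait family `c` and any feasible family `c'`,
`c_{s,j} − r_j ≤ 2 (c'_{s,j} − r_j)` for every job `j`, hence
`max_j (c_{s,j} − r_j) ≤ 2 max_j (c'_{s,j} − r_j)` and
`∑_j (c_{s,j} − r_j) ≤ 2 ∑_j (c'_{s,j} − r_j)`. -/
theorem never_wait_two_competitive_flow_time
    (s n : ℕ) (hs : 1 ≤ s) (hn : 1 ≤ n)
    (p : ℕ → ℝ) (hp : ∀ i, 1 ≤ i → i ≤ s → 0 ≤ p i)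
    (q : ℕ → ℕ) (hq : ∀ i, 1 ≤ i → i ≤ s → 1 ≤ q i)
    (r : ℕ → ℝ) (hr : ∀ j, 1 ≤ j → j < n → r j ≤ r (j + 1))
    (c : ℕ → ℕ → ℝ)
    (hc0 : ∀ j, 1 ≤ j → j ≤ n → c 0 j = r j)
    (hNW : ∀ i j, 1 ≤ i → i ≤ s → 1 ≤ j → j ≤ n →
      c i j ≤ c (i - 1) j + 2 * p i ∨ (q i < j ∧ c i j ≤ c i (j - q i) + p i))
    (c' : ℕ → ℕ → ℝ)
    (hc'0 : ∀ j, 1 ≤ j → j ≤ n → c' 0 j = r j)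
    (hc'1 : ∀ i j, 1 ≤ i → i ≤ s → 1 ≤ j → j ≤ n → c' (i - 1) j + p i ≤ c' i j)
    (hc'2 : ∀ i j, 1 ≤ i → i ≤ s → q i < j → j ≤ n → c' i (j - q i) + p i ≤ c' i j) :
    (∀ j, 1 ≤ j → j ≤ n → c s j - r j ≤ 2 * (c' s j - r j)) ∧
    (Finset.Icc 1 n).sup' (Finset.nonempty_Icc.mpr hn) (fun j => c s j - r j) ≤
      2 * (Finset.Icc 1 n).sup' (Finset.nonempty_Icc.mpr hn) (fun j => c' s j - r j) ∧
    ∑ j ∈ Finset.Icc 1 n, (c s j - r j) ≤ 2 * ∑ j ∈ Finset.Icc 1 n, (c' s j - r j) :=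
  never_wait_two_competitive_flow_time_general s n hn p q hq r c hc0 hNW c' hc'0 hc'1 hc'2
end

section
/- Suppose s = 2. Let c_{1,j} (1 ≤ j ≤ n) be reals such that for every j at least one of the following holds: (a) c_{1,j} ≤ r_j + 2·p_1, or (b) j > q_1 and c_{1,j} ≤ c_{1,j−q_1} + p_1. Then c_{1,j} ≤ c*_{1,j} + p_1 for all 1 ≤ j ≤ n. (These hypotheses hold for the first-stage completion times produced by the t-Switch algorithm, which starts jobs at stage 1 only at starting instants spaced p_1 apart and starts as many jobs as possible at each starting instant.) -/
/-!
Each stage of the lower-bound recursion satisfies `c*_{i-1,j} + p_i ≤ c*_{i,j}` and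
`c*_{i,j-q_i} + p_i ≤ c*_{i,j}`. Strong induction along the chains `j, j - q_1, j - 2q_1, …`
then shows that every job keeps the slack `p_1` it has in case (a): each use of (b) adds `p_1`
on the left and at least `p_1` on the right.
-/

section StageRecursion

variable {n q : ℕ} {p : ℝ} {prev cur : ℕ → ℝ}

theorem stage_prev_add_le
    (hle : ∀ j, 1 ≤ j → j ≤ n → j ≤ q → cur j = prev j + p)
    (hgt : ∀ j, 1 ≤ j → j ≤ n → q < j → cur j = max (prev j) (cur (j - q)) + p)
    {j : ℕ} (h1 : 1 ≤ j) (hn : j ≤ n) : prev j + p ≤ cur j := by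
  rcases le_or_gt j q with hjq | hqj
  · rw [hle j h1 hn hjq]
  · rw [hgt j h1 hn hqj]
    gcongr
    exact le_max_left _ _

theorem stage_lag_add_le
    (hgt : ∀ j, 1 ≤ j → j ≤ n → q < j → cur j = max (prev j) (cur (j - q)) + p)
    {j : ℕ} (hn : j ≤ n) (hqj : q < j) : cur (j - q) + p ≤ cur j := by
  rw [hgt j (by omega) hn hqj]
  gcongr
  exact le_max_right _ _

end StageRecursion

theorem le_add_of_le_or_le_lag_add {n q : ℕ} (hq : 1 ≤ q) {p e : ℝ} {c L U : ℕ → ℝ}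
    (hLU : ∀ j, 1 ≤ j → j ≤ n → L j ≤ U j)
    (hU : ∀ j, j ≤ n → q < j → U (j - q) + p ≤ U j)
    (hc : ∀ j, 1 ≤ j → j ≤ n → c j ≤ L j + e ∨ (q < j ∧ c j ≤ c (j - q) + p)) :
    ∀ j, 1 ≤ j → j ≤ n → c j ≤ U j + e := by
  intro j
  induction j using Nat.strong_induction_on with
  | _ j ih =>
    intro h1 hn
    rcases hc j h1 hn with hbase | ⟨hqj, hstep⟩
    · linarith [hLU j h1 hn]
    · have hlag := ih (j - q) (by omega) (by omega) (by omega)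
      linarith [hU j hn hqj]

theorem t_switch_first_stage_bound_general
    (n : ℕ)
    (p : ℕ → ℝ)
    (q : ℕ → ℕ) (hq : ∀ i, 1 ≤ i → i ≤ 2 → 1 ≤ q i)
    (r : ℕ → ℝ)
    (cstar : ℕ → ℕ → ℝ)
    (hcstar0 : ∀ j, 1 ≤ j → j ≤ n → cstar 0 j = r j)
    (hcstarle : ∀ i j, 1 ≤ i → i ≤ 2 → 1 ≤ j → j ≤ n → j ≤ q i →
      cstar i j = cstar (i - 1) j + p i)
    (hcstargt : ∀ i j, 1 ≤ i → i ≤ 2 → 1 ≤ j → j ≤ n → q i < j →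
      cstar i j = max (cstar (i - 1) j) (cstar i (j - q i)) + p i)
    (c1 : ℕ → ℝ)
    (hc1 : ∀ j, 1 ≤ j → j ≤ n →
      c1 j ≤ r j + 2 * p 1 ∨ (q 1 < j ∧ c1 j ≤ c1 (j - q 1) + p 1)) :
    ∀ j, 1 ≤ j → j ≤ n → c1 j ≤ cstar 1 j + p 1 := by
  have hle := fun j => hcstarle 1 j le_rfl one_le_two
  have hgt := fun j => hcstargt 1 j le_rfl one_le_two
  refine le_add_of_le_or_le_lag_add (hq 1 le_rfl one_le_two) (L := fun j => r j + p 1)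
    (fun j h1 hn => ?_) (fun j hn hqj => stage_lag_add_le hgt hn hqj)
    (fun j h1 hn => (hc1 j h1 hn).imp_left fun ha => by linarith)
  rw [← hcstar0 j h1 hn]
  exact stage_prev_add_le hle hgt h1 hn

/-- First-stage bound for the t-Switch algorithm in a two-stage PFFB:
if `c_{1,j}` satisfies, for every job `j`, either (a) `c_{1,j} ≤ r_j + 2 p_1`
or (b) `j > q_1` and `c_{1,j} ≤ c_{1,j−q_1} + p_1`, then
`c_{1,j} ≤ c*_{1,j} + p_1` for all `1 ≤ j ≤ n`. -/
theorem t_switch_first_stage_bound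
    (n : ℕ) (hn : 1 ≤ n)
    (p : ℕ → ℝ) (hp : ∀ i, 1 ≤ i → i ≤ 2 → 0 ≤ p i)
    (q : ℕ → ℕ) (hq : ∀ i, 1 ≤ i → i ≤ 2 → 1 ≤ q i)
    (r : ℕ → ℝ) (hr : ∀ j, 1 ≤ j → j < n → r j ≤ r (j + 1))
    (cstar : ℕ → ℕ → ℝ)
    (hcstar0 : ∀ j, 1 ≤ j → j ≤ n → cstar 0 j = r j)
    (hcstarle : ∀ i j, 1 ≤ i → i ≤ 2 → 1 ≤ j → j ≤ n → j ≤ q i →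
      cstar i j = cstar (i - 1) j + p i)
    (hcstargt : ∀ i j, 1 ≤ i → i ≤ 2 → 1 ≤ j → j ≤ n → q i < j →
      cstar i j = max (cstar (i - 1) j) (cstar i (j - q i)) + p i)
    (c1 : ℕ → ℝ)
    (hc1 : ∀ j, 1 ≤ j → j ≤ n →
      c1 j ≤ r j + 2 * p 1 ∨ (q 1 < j ∧ c1 j ≤ c1 (j - q 1) + p 1)) :
    ∀ j, 1 ≤ j → j ≤ n → c1 j ≤ cstar 1 j + p 1 :=
  t_switch_first_stage_bound_general n p q hq r cstar hcstar0 hcstarle hcstargt c1 hc1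
end

section
/- Suppose s = 2, r_j ≥ 0 for all j, and let φ = (1+√5)/2 and t = φ·p_1 + (φ−1)·p_2. Let c_{1,j} and c_{2,j} (1 ≤ j ≤ n) be reals such that j ↦ c_{1,j} is nondecreasing and such that for every j with c_{1,j} ≤ t at least one of the following holds: (a) c_{2,j} = t + p_2, or (b) j > q_2 and c_{2,j} ≤ c_{2,j−q_2} + p_2. Then for every j with c_{1,j} ≤ t, c_{2,j} ≤ c*_{2,j} + (φ − 1)·(p_1 + p_2). -/
/-!
Since `t + p₂ = φ (p₁ + p₂)` and `c*_{2,j} ≥ r_j + p₁ + p₂ ≥ p₁ + p₂`, a job of type (a) meets the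
bound outright. A job of type (b) gains at most `p₂` over job `j - q₂`, while the recursion for
`c*_{2,·}` gains at least `p₂`; as `j - q₂` again finishes stage one by time `t`, strong induction
along the chain `j, j - q₂, j - 2q₂, …` reduces every job to one of type (a).
-/

theorem le_of_le_or_step_sub_le {q : ℕ} (hq : 0 < q) {P : ℕ → Prop} {f g : ℕ → ℝ}
    (hP : ∀ j, P j → q < j → P (j - q))
    (h : ∀ j, P j → f j ≤ g j ∨ (q < j ∧ f j - f (j - q) ≤ g j - g (j - q))) :
    ∀ j, P j → f j ≤ g j := by
  intro j
  induction j using Nat.strong_induction_on with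
  | _ j ih =>
    intro hPj
    rcases h j hPj with hle | ⟨hqj, hstep⟩
    · exact hle
    · have hprev := ih (j - q) (by omega) (hP j hPj hqj)
      linarith

section LowerBound

variable {p : ℕ → ℝ} {q : ℕ → ℕ} {cstar : ℕ → ℕ → ℝ} {i j : ℕ}

theorem prev_add_le_of_recursion (hle : j ≤ q i → cstar i j = cstar (i - 1) j + p i)
    (hgt : q i < j → cstar i j = max (cstar (i - 1) j) (cstar i (j - q i)) + p i) :
    cstar (i - 1) j + p i ≤ cstar i j := by
  rcases le_or_gt j (q i) with h | h
  · exact (hle h).ge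
  · rw [hgt h]
    gcongr
    exact le_max_left _ _

theorem back_add_le_of_recursion (h : q i < j)
    (hgt : q i < j → cstar i j = max (cstar (i - 1) j) (cstar i (j - q i)) + p i) :
    cstar i (j - q i) + p i ≤ cstar i j := by
  rw [hgt h]
  gcongr
  exact le_max_right _ _

end LowerBound

theorem t_switch_second_stage_early_bound_general
    (n : ℕ)
    (p : ℕ → ℝ)
    (q : ℕ → ℕ) (hq : ∀ i, 1 ≤ i → i ≤ 2 → 1 ≤ q i)
    (r : ℕ → ℝ)
    (hr0 : ∀ j, 1 ≤ j → j ≤ n → 0 ≤ r j)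
    (cstar : ℕ → ℕ → ℝ)
    (hcstar0 : ∀ j, 1 ≤ j → j ≤ n → cstar 0 j = r j)
    (hcstarle : ∀ i j, 1 ≤ i → i ≤ 2 → 1 ≤ j → j ≤ n → j ≤ q i →
      cstar i j = cstar (i - 1) j + p i)
    (hcstargt : ∀ i j, 1 ≤ i → i ≤ 2 → 1 ≤ j → j ≤ n → q i < j →
      cstar i j = max (cstar (i - 1) j) (cstar i (j - q i)) + p i)
    (φ : ℝ)
    (t : ℝ) (ht : t = φ * p 1 + (φ - 1) * p 2)
    (c1 c2 : ℕ → ℝ)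
    (hc1mono : ∀ j j', 1 ≤ j → j ≤ j' → j' ≤ n → c1 j ≤ c1 j')
    (hc2 : ∀ j, 1 ≤ j → j ≤ n → c1 j ≤ t →
      c2 j = t + p 2 ∨ (q 2 < j ∧ c2 j ≤ c2 (j - q 2) + p 2)) :
    ∀ j, 1 ≤ j → j ≤ n → c1 j ≤ t →
      c2 j ≤ cstar 2 j + (φ - 1) * (p 1 + p 2) := by
  have hstage : ∀ i j, 1 ≤ i → i ≤ 2 → 1 ≤ j → j ≤ n → cstar (i - 1) j + p i ≤ cstar i j :=
    fun i j hi hi2 hj hjn =>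
      prev_add_le_of_recursion (hcstarle i j hi hi2 hj hjn) (hcstargt i j hi hi2 hj hjn)
  have hfloor : ∀ j, 1 ≤ j → j ≤ n → p 1 + p 2 ≤ cstar 2 j := fun j hj hjn => by
    have h1 := hstage 1 j le_rfl one_le_two hj hjn
    have h2 := hstage 2 j one_le_two le_rfl hj hjn
    simp only [Nat.sub_self, hcstar0 j hj hjn, Nat.add_one_sub_one] at h1 h2
    linarith [hr0 j hj hjn]
  have hswitch : t + p 2 = (p 1 + p 2) + (φ - 1) * (p 1 + p 2) := by rw [ht]; ring
  intro j hj hjn hj1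
  refine le_of_le_or_step_sub_le (hq 2 one_le_two le_rfl) (P := fun j => 1 ≤ j ∧ j ≤ n ∧ c1 j ≤ t)
    (f := c2) (g := fun j => cstar 2 j + (φ - 1) * (p 1 + p 2)) ?_ ?_ j ⟨hj, hjn, hj1⟩
  · rintro j ⟨hj, hjn, hj1⟩ hqj
    exact ⟨by omega, by omega, (hc1mono _ j (by omega) (by omega) hjn).trans hj1⟩
  · rintro j ⟨hj, hjn, hj1⟩
    rcases hc2 j hj hjn hj1 with hswitched | ⟨hqj, hnever_wait⟩
    · left
      linarith [hfloor j hj hjn]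
    · right
      refine ⟨hqj, ?_⟩
      linarith [back_add_le_of_recursion hqj (hcstargt 2 j one_le_two le_rfl hj hjn)]

/-- Second-stage bound for jobs finishing stage one early in the t-Switch
algorithm: with `φ = (1+√5)/2` and `t = φ p_1 + (φ−1) p_2`, if `c_{1,·}` is
nondecreasing and every job `j` with `c_{1,j} ≤ t` satisfies either
(a) `c_{2,j} = t + p_2` or (b) `j > q_2` and `c_{2,j} ≤ c_{2,j−q_2} + p_2`,
then every such job satisfies `c_{2,j} ≤ c*_{2,j} + (φ − 1)(p_1 + p_2)`. -/
theorem t_switch_second_stage_early_bound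
    (n : ℕ) (hn : 1 ≤ n)
    (p : ℕ → ℝ) (hp : ∀ i, 1 ≤ i → i ≤ 2 → 0 ≤ p i)
    (q : ℕ → ℕ) (hq : ∀ i, 1 ≤ i → i ≤ 2 → 1 ≤ q i)
    (r : ℕ → ℝ) (hr : ∀ j, 1 ≤ j → j < n → r j ≤ r (j + 1))
    (hr0 : ∀ j, 1 ≤ j → j ≤ n → 0 ≤ r j)
    (cstar : ℕ → ℕ → ℝ)
    (hcstar0 : ∀ j, 1 ≤ j → j ≤ n → cstar 0 j = r j)
    (hcstarle : ∀ i j, 1 ≤ i → i ≤ 2 → 1 ≤ j → j ≤ n → j ≤ q i →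
      cstar i j = cstar (i - 1) j + p i)
    (hcstargt : ∀ i j, 1 ≤ i → i ≤ 2 → 1 ≤ j → j ≤ n → q i < j →
      cstar i j = max (cstar (i - 1) j) (cstar i (j - q i)) + p i)
    (φ : ℝ) (hφ : φ = (1 + Real.sqrt 5) / 2)
    (t : ℝ) (ht : t = φ * p 1 + (φ - 1) * p 2)
    (c1 c2 : ℕ → ℝ)
    (hc1mono : ∀ j j', 1 ≤ j → j ≤ j' → j' ≤ n → c1 j ≤ c1 j')
    (hc2 : ∀ j, 1 ≤ j → j ≤ n → c1 j ≤ t →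
      c2 j = t + p 2 ∨ (q 2 < j ∧ c2 j ≤ c2 (j - q 2) + p 2)) :
    ∀ j, 1 ≤ j → j ≤ n → c1 j ≤ t →
      c2 j ≤ cstar 2 j + (φ - 1) * (p 1 + p 2) :=
  t_switch_second_stage_early_bound_general n p q hq r hr0 cstar hcstar0 hcstarle hcstargt φ t ht c1
    c2 hc1mono hc2
end

section
/- Suppose s = 2, p_1 > 0, p_2 > 0, r_j ≥ 0 for all j, and let φ = (1+√5)/2 and t = φ·p_1 + (φ−1)·p_2. Let c_{1,j} and c_{2,j} (1 ≤ j ≤ n) be reals such that: (i) j ↦ c_{1,j} is nondecreasing; (ii) for every j there exists an integer k with c_{1,j} = t + k·p_1; (iii) for every j, either c_{1,j} ≤ r_j + 2·p_1, or j > q_1 and c_{1,j} ≤ c_{1,j−q_1} + p_1; (iv) for every j with c_{1,j} ≤ t, either c_{2,j} = t + p_2, or j > q_2 and c_{2,j} ≤ c_{2,j−q_2} + p_2; (v) for every j with c_{1,j} > t, either c_{2,j} ≤ c_{1,j} + 2·p_2, or j > q_2 and c_{2,j} ≤ c_{2,j−q_2} + p_2. Then c_{2,j} ≤ φ·c*_{2,j}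 for all 1 ≤ j ≤ n; consequently, for any feasible family (c'_{i,j}), c_{2,j} ≤ φ·c'_{2,j} for all j, so both the makespan and the total completion time of the produced schedule are at most φ times those of any feasible permutation schedule. (The t-Switch algorithm is φ-competitive for makespan and total completion time in a two-stage PFFB.) -/
/-!
Along the chain of jobs `j, j - q₂, j - 2q₂, …` the stage-2 completion times of t-Switch grow by
at most `p₂` per step, exactly as the lower bounds `c*_{2,j}` grow by at least `p₂`; so it suffices
to compare the two where the chain starts. A job finishing stage 1 by `t` finishes stage 2 at
`t + p₂ = φ (p₁ + p₂)`. A job finishing stage 1 after `t` does so at a starting instant, hence at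
`t + p₁` or later, and stage 1 loses at most `p₁` against `c*_{1,j}`; the choice of `t` is exactly
what makes `c_{1,j} + 2p₂ ≤ φ (c_{1,j} - p₁ + p₂)` hold, by `φ² = φ + 1`.
-/

open Real

theorem le_mul_add_of_le_or_le_sub_add {n q : ℕ} (hq : 1 ≤ q) {p l m : ℝ} (hp : 0 ≤ p)
    (hl : 1 ≤ l) {c b : ℕ → ℝ} (hb : ∀ j, q < j → j ≤ n → b (j - q) + p ≤ b j)
    (hc : ∀ j, 1 ≤ j → j ≤ n → c j ≤ l * b j + m ∨ (q < j ∧ c j ≤ c (j - q) + p)) :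
    ∀ j, 1 ≤ j → j ≤ n → c j ≤ l * b j + m := by
  intro j
  induction j using Nat.strong_induction_on with
  | _ j ih =>
    intro hj hjn
    rcases hc j hj hjn with hbase | ⟨hqj, hstep⟩
    · exact hbase
    · have hprev := ih (j - q) (by omega) (by omega) (by omega)
      have := mul_le_mul_of_nonneg_left (hb j hqj hjn) (zero_le_one.trans hl)
      nlinarith

theorem add_le_of_lt_add_intCast_mul {t p : ℝ} {k : ℤ} (hp : 0 < p) (h : t < t + k * p) :
    t + p ≤ t + k * p := by
  have hk : (0 : ℝ) < k := pos_of_mul_pos_left (by linarith) hp.le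
  have hk1 : (1 : ℝ) ≤ k := by exact_mod_cast Int.cast_pos.mp hk
  nlinarith

-- Equality at `x = t + p₁`, since `(φ - 1)(φ + 1) = φ` and `(φ - 1)² = 2 - φ`.
theorem add_two_mul_le_goldenRatio_mul {p₁ p₂ x : ℝ}
    (hx : goldenRatio * p₁ + (goldenRatio - 1) * p₂ + p₁ ≤ x) :
    x + 2 * p₂ ≤ goldenRatio * (x - p₁ + p₂) := by
  have hsq : goldenRatio ^ 2 * (p₁ + p₂) = (goldenRatio + 1) * (p₁ + p₂) := by
    rw [goldenRatio_sq]
  nlinarith [mul_le_mul_of_nonneg_left hx (sub_nonneg.mpr one_lt_goldenRatio.le)]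

theorem le_goldenRatio_mul_of_early {p₁ p₂ b₂ : ℝ} (hb₂ : p₁ + p₂ ≤ b₂) :
    goldenRatio * p₁ + (goldenRatio - 1) * p₂ + p₂ ≤ goldenRatio * b₂ := by
  nlinarith [mul_le_mul_of_nonneg_left hb₂ goldenRatio_pos.le]

theorem le_goldenRatio_mul_of_late {p₁ p₂ c₁ c₂ b₁ b₂ : ℝ} {k : ℤ} (hp₁ : 0 < p₁)
    (hc₁ : c₁ = goldenRatio * p₁ + (goldenRatio - 1) * p₂ + k * p₁)
    (hlate : goldenRatio * p₁ + (goldenRatio - 1) * p₂ < c₁) (hc₂ : c₂ ≤ c₁ + 2 * p₂)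
    (hb₁ : c₁ ≤ b₁ + p₁) (hb₂ : b₁ + p₂ ≤ b₂) : c₂ ≤ goldenRatio * b₂ := by
  rw [hc₁] at hlate
  have hbound := add_two_mul_le_goldenRatio_mul (hc₁ ▸ add_le_of_lt_add_intCast_mul hp₁ hlate)
  nlinarith [mul_le_mul_of_nonneg_left (by linarith : c₁ - p₁ + p₂ ≤ b₂) goldenRatio_pos.le]

section LowerBound

variable {s n : ℕ} {p : ℕ → ℝ} {q : ℕ → ℕ} {r : ℕ → ℝ} {cstar : ℕ → ℕ → ℝ}

theorem cstar_prev_add_le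
    (hle : ∀ i j, 1 ≤ i → i ≤ s → 1 ≤ j → j ≤ n → j ≤ q i → cstar i j = cstar (i - 1) j + p i)
    (hgt : ∀ i j, 1 ≤ i → i ≤ s → 1 ≤ j → j ≤ n → q i < j →
      cstar i j = max (cstar (i - 1) j) (cstar i (j - q i)) + p i)
    {i j : ℕ} (hi : 1 ≤ i) (his : i ≤ s) (hj : 1 ≤ j) (hjn : j ≤ n) :
    cstar (i - 1) j + p i ≤ cstar i j := by
  rcases le_or_gt j (q i) with hjq | hqj
  · exact (hle i j hi his hj hjn hjq).ge
  · rw [hgt i j hi his hj hjn hqj]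
    gcongr
    exact le_max_left _ _

theorem cstar_batch_add_le
    (hgt : ∀ i j, 1 ≤ i → i ≤ s → 1 ≤ j → j ≤ n → q i < j →
      cstar i j = max (cstar (i - 1) j) (cstar i (j - q i)) + p i)
    {i j : ℕ} (hi : 1 ≤ i) (his : i ≤ s) (hqj : q i < j) (hjn : j ≤ n) :
    cstar i (j - q i) + p i ≤ cstar i j := by
  rw [hgt i j hi his (by omega) hjn hqj]
  gcongr
  exact le_max_right _ _

theorem cstar_le_of_feasible (hq : ∀ i, 1 ≤ i → i ≤ s → 1 ≤ q i)
    (h0 : ∀ j, 1 ≤ j → j ≤ n → cstar 0 j = r j)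
    (hle : ∀ i j, 1 ≤ i → i ≤ s → 1 ≤ j → j ≤ n → j ≤ q i → cstar i j = cstar (i - 1) j + p i)
    (hgt : ∀ i j, 1 ≤ i → i ≤ s → 1 ≤ j → j ≤ n → q i < j →
      cstar i j = max (cstar (i - 1) j) (cstar i (j - q i)) + p i)
    {c' : ℕ → ℕ → ℝ} (h0' : ∀ j, 1 ≤ j → j ≤ n → c' 0 j = r j)
    (hstage : ∀ i j, 1 ≤ i → i ≤ s → 1 ≤ j → j ≤ n → c' (i - 1) j + p i ≤ c' i j)
    (hbatch : ∀ i j, 1 ≤ i → i ≤ s → q i < j → j ≤ n → c' i (j - q i) + p i ≤ c' i j) :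
    ∀ i, i ≤ s → ∀ j, 1 ≤ j → j ≤ n → cstar i j ≤ c' i j := by
  intro i
  induction i with
  | zero => intro _ j hj hjn; rw [h0 j hj hjn, h0' j hj hjn]
  | succ i ihi =>
    intro his j
    induction j using Nat.strong_induction_on with
    | _ j ihj =>
      intro hj hjn
      have hprev : cstar i j + p (i + 1) ≤ c' (i + 1) j := by
        have := hstage (i + 1) j (by omega) his hj hjn
        simp only [Nat.add_sub_cancel] at this
        linarith [ihi (by omega) j hj hjn]
      rcases le_or_gt j (q (i + 1)) with hjq | hqj
      · rw [hle (i + 1) j (by omega) his hj hjn hjq, Nat.add_sub_cancel]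
        exact hprev
      · have hq1 := hq (i + 1) (by omega) his
        have hbatch' := hbatch (i + 1) j (by omega) his hqj hjn
        have hih := ihj (j - q (i + 1)) (by omega) (by omega) (by omega)
        rw [hgt (i + 1) j (by omega) his hj hjn hqj, Nat.add_sub_cancel]
        have := max_le (le_sub_iff_add_le.mpr hprev) (le_sub_iff_add_le.mpr (by linarith))
        linarith

end LowerBound

theorem t_switch_phi_competitive_general
    (n : ℕ) (hn : 1 ≤ n)
    (p : ℕ → ℝ) (hp1 : 0 < p 1) (hp2 : 0 < p 2)
    (q : ℕ → ℕ) (hq : ∀ i, 1 ≤ i → i ≤ 2 → 1 ≤ q i)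
    (r : ℕ → ℝ)
    (hr0 : ∀ j, 1 ≤ j → j ≤ n → 0 ≤ r j)
    (cstar : ℕ → ℕ → ℝ)
    (hcstar0 : ∀ j, 1 ≤ j → j ≤ n → cstar 0 j = r j)
    (hcstarle : ∀ i j, 1 ≤ i → i ≤ 2 → 1 ≤ j → j ≤ n → j ≤ q i →
      cstar i j = cstar (i - 1) j + p i)
    (hcstargt : ∀ i j, 1 ≤ i → i ≤ 2 → 1 ≤ j → j ≤ n → q i < j →
      cstar i j = max (cstar (i - 1) j) (cstar i (j - q i)) + p i)
    (φ : ℝ) (hφ : φ = (1 + Real.sqrt 5) / 2)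
    (t : ℝ) (ht : t = φ * p 1 + (φ - 1) * p 2)
    (c1 c2 : ℕ → ℝ)
    (hc1inst : ∀ j, 1 ≤ j → j ≤ n → ∃ k : ℤ, c1 j = t + (k : ℝ) * p 1)
    (hc1 : ∀ j, 1 ≤ j → j ≤ n →
      c1 j ≤ r j + 2 * p 1 ∨ (q 1 < j ∧ c1 j ≤ c1 (j - q 1) + p 1))
    (hc2early : ∀ j, 1 ≤ j → j ≤ n → c1 j ≤ t →
      c2 j = t + p 2 ∨ (q 2 < j ∧ c2 j ≤ c2 (j - q 2) + p 2))
    (hc2late : ∀ j, 1 ≤ j → j ≤ n → t < c1 j →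
      c2 j ≤ c1 j + 2 * p 2 ∨ (q 2 < j ∧ c2 j ≤ c2 (j - q 2) + p 2)) :
    (∀ j, 1 ≤ j → j ≤ n → c2 j ≤ φ * cstar 2 j) ∧
    (∀ c' : ℕ → ℕ → ℝ,
      (∀ j, 1 ≤ j → j ≤ n → c' 0 j = r j) →
      (∀ i j, 1 ≤ i → i ≤ 2 → 1 ≤ j → j ≤ n → c' (i - 1) j + p i ≤ c' i j) →
      (∀ i j, 1 ≤ i → i ≤ 2 → q i < j → j ≤ n → c' i (j - q i) + p i ≤ c' i j) →
      (∀ j, 1 ≤ j → j ≤ n → c2 j ≤ φ * c' 2 j) ∧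
      (Finset.Icc 1 n).sup' (Finset.nonempty_Icc.mpr hn) (fun j => c2 j) ≤
        φ * (Finset.Icc 1 n).sup' (Finset.nonempty_Icc.mpr hn) (fun j => c' 2 j) ∧
      ∑ j ∈ Finset.Icc 1 n, c2 j ≤ φ * ∑ j ∈ Finset.Icc 1 n, c' 2 j) := by
  subst hφ ht
  have hstage1 j (hj : 1 ≤ j) (hjn : j ≤ n) : r j + p 1 ≤ cstar 1 j := by
    simpa [hcstar0 j hj hjn] using cstar_prev_add_le hcstarle hcstargt le_rfl one_le_two hj hjn
  have hstage2 j (hj : 1 ≤ j) (hjn : j ≤ n) : cstar 1 j + p 2 ≤ cstar 2 j :=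
    cstar_prev_add_le hcstarle hcstargt one_le_two le_rfl hj hjn
  have hc1_le : ∀ j, 1 ≤ j → j ≤ n → c1 j ≤ 1 * cstar 1 j + p 1 :=
    le_mul_add_of_le_or_le_sub_add (hq 1 le_rfl one_le_two) hp1.le le_rfl
      (fun j => cstar_batch_add_le hcstargt le_rfl one_le_two)
      fun j hj hjn => (hc1 j hj hjn).imp_left fun h => by linarith [hstage1 j hj hjn]
  have hc2_le : ∀ j, 1 ≤ j → j ≤ n → c2 j ≤ goldenRatio * cstar 2 j + 0 := by
    refine le_mul_add_of_le_or_le_sub_add (hq 2 one_le_two le_rfl) hp2.le one_lt_goldenRatio.le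
      (fun j => cstar_batch_add_le hcstargt one_le_two le_rfl) fun j hj hjn => ?_
    rw [add_zero]
    rcases le_or_gt (c1 j) _ with hearly | hlate
    · exact (hc2early j hj hjn hearly).imp_left fun h => h.trans_le <| le_goldenRatio_mul_of_early
        (by linarith [hr0 j hj hjn, hstage1 j hj hjn, hstage2 j hj hjn])
    · obtain ⟨k, hk⟩ := hc1inst j hj hjn
      exact (hc2late j hj hjn hlate).imp_left fun h => le_goldenRatio_mul_of_late hp1 hk hlate h
        (by simpa using hc1_le j hj hjn) (hstage2 j hj hjn)
  simp only [add_zero] at hc2_le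
  refine ⟨hc2_le, fun c' h0' hstage hbatch => ?_⟩
  have hc' j (hj : 1 ≤ j) (hjn : j ≤ n) : c2 j ≤ goldenRatio * c' 2 j :=
    (hc2_le j hj hjn).trans <| mul_le_mul_of_nonneg_left
      (cstar_le_of_feasible hq hcstar0 hcstarle hcstargt h0' hstage hbatch 2 le_rfl j hj hjn)
      goldenRatio_pos.le
  refine ⟨hc', ?_, ?_⟩
  · rw [Finset.mul₀_sup' goldenRatio_pos.le]
    exact Finset.sup'_mono_fun fun j hj => hc' j (Finset.mem_Icc.mp hj).1 (Finset.mem_Icc.mp hj).2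
  · rw [Finset.mul_sum]
    exact Finset.sum_le_sum fun j hj => hc' j (Finset.mem_Icc.mp hj).1 (Finset.mem_Icc.mp hj).2

/-- φ-competitiveness of the t-Switch algorithm for a two-stage PFFB:
with `φ = (1+√5)/2` and `t = φ p_1 + (φ−1) p_2`, under hypotheses (i)–(v) on
the completion times `c_{1,·}, c_{2,·}` produced by the t-Switch algorithm,
`c_{2,j} ≤ φ·c*_{2,j}` for all jobs; consequently, for every feasible family
`c'`, `c_{2,j} ≤ φ·c'_{2,j}` for all `j`, and the makespan and total
completion time are at most `φ` times those of the feasible family. -/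
theorem t_switch_phi_competitive
    (n : ℕ) (hn : 1 ≤ n)
    (p : ℕ → ℝ) (hp1 : 0 < p 1) (hp2 : 0 < p 2)
    (q : ℕ → ℕ) (hq : ∀ i, 1 ≤ i → i ≤ 2 → 1 ≤ q i)
    (r : ℕ → ℝ) (hr : ∀ j, 1 ≤ j → j < n → r j ≤ r (j + 1))
    (hr0 : ∀ j, 1 ≤ j → j ≤ n → 0 ≤ r j)
    (cstar : ℕ → ℕ → ℝ)
    (hcstar0 : ∀ j, 1 ≤ j → j ≤ n → cstar 0 j = r j)
    (hcstarle : ∀ i j, 1 ≤ i → i ≤ 2 → 1 ≤ j → j ≤ n → j ≤ q i →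
      cstar i j = cstar (i - 1) j + p i)
    (hcstargt : ∀ i j, 1 ≤ i → i ≤ 2 → 1 ≤ j → j ≤ n → q i < j →
      cstar i j = max (cstar (i - 1) j) (cstar i (j - q i)) + p i)
    (φ : ℝ) (hφ : φ = (1 + Real.sqrt 5) / 2)
    (t : ℝ) (ht : t = φ * p 1 + (φ - 1) * p 2)
    (c1 c2 : ℕ → ℝ)
    (hc1mono : ∀ j j', 1 ≤ j → j ≤ j' → j' ≤ n → c1 j ≤ c1 j')
    (hc1inst : ∀ j, 1 ≤ j → j ≤ n → ∃ k : ℤ, c1 j = t + (k : ℝ) * p 1)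
    (hc1 : ∀ j, 1 ≤ j → j ≤ n →
      c1 j ≤ r j + 2 * p 1 ∨ (q 1 < j ∧ c1 j ≤ c1 (j - q 1) + p 1))
    (hc2early : ∀ j, 1 ≤ j → j ≤ n → c1 j ≤ t →
      c2 j = t + p 2 ∨ (q 2 < j ∧ c2 j ≤ c2 (j - q 2) + p 2))
    (hc2late : ∀ j, 1 ≤ j → j ≤ n → t < c1 j →
      c2 j ≤ c1 j + 2 * p 2 ∨ (q 2 < j ∧ c2 j ≤ c2 (j - q 2) + p 2)) :
    (∀ j, 1 ≤ j → j ≤ n → c2 j ≤ φ * cstar 2 j) ∧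
    (∀ c' : ℕ → ℕ → ℝ,
      (∀ j, 1 ≤ j → j ≤ n → c' 0 j = r j) →
      (∀ i j, 1 ≤ i → i ≤ 2 → 1 ≤ j → j ≤ n → c' (i - 1) j + p i ≤ c' i j) →
      (∀ i j, 1 ≤ i → i ≤ 2 → q i < j → j ≤ n → c' i (j - q i) + p i ≤ c' i j) →
      (∀ j, 1 ≤ j → j ≤ n → c2 j ≤ φ * c' 2 j) ∧
      (Finset.Icc 1 n).sup' (Finset.nonempty_Icc.mpr hn) (fun j => c2 j) ≤
        φ * (Finset.Icc 1 n).sup' (Finset.nonempty_Icc.mpr hn) (fun j => c' 2 j) ∧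
      ∑ j ∈ Finset.Icc 1 n, c2 j ≤ φ * ∑ j ∈ Finset.Icc 1 n, c' 2 j) :=
  t_switch_phi_competitive_general n hn p hp1 hp2 q hq r hr0 cstar hcstar0 hcstarle hcstargt φ hφ t
    ht c1 c2 hc1inst hc1 hc2early hc2late
end
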